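/- The algebra P_n satisfies the identity (ab)a = 0 for all a,b in P_n. -/

import Mathlib

inductive PBasis (n : ℕ) : Type
  | a : Fin n → Fin n → PBasis n
  | b : Fin n → Fin n → PBasis n
  | c : Fin n → PBasis n
  | d : Fin n → Fin n → PBasis n
  | e : Fin n → Fin n → PBasis n
  deriving DecidableEq

abbrev Pn (F : Type*) [Field F] (n : ℕ) : Type _ := PBasis n →₀ F

open PBasis in
noncomputable def mulB (F : Type*) [Field F] {n : ℕ} : PBasis n → PBasis n → Pn F n
  | a i j, c k => if k = i then Finsupp.single (d i j) 1 else 0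
  | b i j, c k => if k = i then Finsupp.single (e i j) 1 else 0
  | a i j, e k l => if i = k ∧ j = l then Finsupp.single (c j) 1 else 0
  | e k l, a i j => if i = k ∧ j = l then Finsupp.single (c j) 1 else 0
  | b i j, d k l => if i = k ∧ j = l then -Finsupp.single (c j) 1 else 0
  | d k l, b i j => if i = k ∧ j = l then -Finsupp.single (c j) 1 else 0
  | _, _ => 0

noncomputable def mulLin (F : Type*) [Field F] {n : ℕ} :
    Pn F n →ₗ[F] Pn F n →ₗ[F] Pn F n :=
  Finsupp.lift (Pn F n →ₗ[F] Pn F n) F (PBasis n)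
    (fun u => Finsupp.lift (Pn F n) F (PBasis n) (fun v => mulB F u v))

noncomputable instance (F : Type*) [Field F] (n : ℕ) : Mul (Pn F n) :=
  ⟨fun x y => mulLin F x y⟩


/-!
The product of two basis vectors is nonzero only if it has the form `a c`, `b c`, `a e`, `e a`,
`b d` or `d b`; the first two give `d` and `e`, the others multiples of `c`, which annihilates
everything from the left. Hence `(u v) w` vanishes on basis vectors except for
`(a_{ij} c_i) b_{ij} = -c_j` and `(b_{ij} c_i) a_{ij} = c_j`, so the trilinear map
`(x, y, z) ↦ (x y) z` vanishes for `x = z` on the basis and is skew in `x, z` there.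
Bilinearity spreads both facts to all of `P_n`.
-/

namespace LinearMap

variable {ι R M N : Type*} [CommSemiring R] [AddCommMonoid M] [Module R M]
  [AddCommMonoid N] [Module R N]

theorem isAlt_of_basis (b : Module.Basis ι R M) {B : M →ₗ[R] M →ₗ[R] N}
    (hdiag : ∀ i, B (b i) (b i) = 0) (hcross : ∀ i j, B (b i) (b j) + B (b j) (b i) = 0) :
    B.IsAlt := by
  have hsymm : B + B.flip = 0 := ext_basis b b hcross
  intro x
  have hx : x ∈ Submodule.span R (Set.range b) := b.span_eq ▸ Submodule.mem_top
  induction hx using Submodule.span_induction with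
  | mem x hx => obtain ⟨i, rfl⟩ := hx; exact hdiag i
  | zero => simp
  | add x y _ _ hx hy =>
    have hxy : B x y + B y x = 0 := congr($hsymm x y)
    rw [map_add₂, map_add, map_add, hx, hy, zero_add, add_zero, hxy]
  | smul r x _ hx => rw [map_smul₂, map_smul, hx, smul_zero, smul_zero]

theorem apply_apply_self_eq_zero_of_basis (b : Module.Basis ι R M) (μ : M →ₗ[R] M →ₗ[R] M)
    (hdiag : ∀ i j, μ (μ (b i) (b j)) (b i) = 0)
    (hcross : ∀ i j k, μ (μ (b i) (b j)) (b k) + μ (μ (b k) (b j)) (b i) = 0) (x y : M) :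
    μ (μ x y) x = 0 := by
  refine isAlt_of_basis b (B := μ ∘ₗ μ.flip y) (fun i => ?_) (fun i k => ?_) x
  · have : μ.flip (b i) ∘ₗ μ (b i) = 0 := b.ext fun j => hdiag i j
    exact congr($this y)
  · have : μ.flip (b k) ∘ₗ μ (b i) + μ.flip (b i) ∘ₗ μ (b k) = 0 :=
      b.ext fun j => hcross i j k
    exact congr($this y)

end LinearMap

namespace PBasis

open Finsupp

variable {F : Type*} [Field F] {n : ℕ}

theorem mulLin_single_one_single_one (u v : PBasis n) :
    mulLin F (single u 1) (single v 1) = mulB F u v := by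
  simp [mulLin]

theorem single_mul_single_mul_single_self (u v : PBasis n) :
    (single u 1 * single v 1) * single u (1 : F) = 0 := by
  change mulLin F (mulLin F _ _) _ = 0
  rw [mulLin_single_one_single_one]
  cases u <;> cases v <;> simp only [mulB] <;> (try split_ifs) <;>
    simp [mulB, mulLin_single_one_single_one]

theorem single_mul_single_mul_single_add_swap (u v w : PBasis n) :
    (single u 1 * single v 1) * single w (1 : F) + (single w 1 * single v 1) * single u 1 = 0 := by
  change mulLin F (mulLin F _ _) _ + mulLin F (mulLin F _ _) _ = 0
  simp only [mulLin_single_one_single_one]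
  cases u <;> cases v <;> cases w <;> simp only [mulB] <;> (try split_ifs) <;>
    simp [mulB, mulLin_single_one_single_one] <;> grind

end PBasis

theorem stmt (F : Type*) [Field F] (n : ℕ) :
    ∀ x y : Pn F n, (x * y) * x = 0 := by
  refine LinearMap.apply_apply_self_eq_zero_of_basis Finsupp.basisSingleOne (mulLin F) ?_ ?_
  · intro u v
    simp only [Finsupp.coe_basisSingleOne]
    exact PBasis.single_mul_single_mul_single_self u v
  · intro u v w
    simp only [Finsupp.coe_basisSingleOne]
    exact PBasis.single_mul_single_mul_single_add_swap u v w
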